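/- arXiv:1807.02156 — 3 statements merged into one kernel-verified Lean document; each statement's English description precedes it below -/
import Mathlib

section
/- Let n ≥ 1 and let A be a set partition of {1,…,n}. Then the depth index of A equals the sum of the partial depth indices: t(A) = Σ_{v=1}^n t_v(A). -/
open Finset
open scoped Classical

noncomputable section

/-- The arcs of a set partition `A` of `{1,…,n}`: pairs `(i,j)` with `i < j`, `i` and `j` in
the same block, and no element of that block strictly between `i` and `j`. -/
noncomputable def arcs (n : ℕ) (A : Finpartition (Finset.Icc 1 n)) : Finset (ℕ × ℕ) :=
  (Finset.Icc 1 n ×ˢ Finset.Icc 1 n).filter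
    (fun p => p.1 < p.2 ∧ ∃ B ∈ A.parts, p.1 ∈ B ∧ p.2 ∈ B ∧
      ∀ k ∈ B, ¬ (p.1 < k ∧ k < p.2))

/-- The depth of a vertex `v`: the number of arcs `(i,j)` with `i < v < j`. -/
noncomputable def vertexDepth (n : ℕ) (A : Finpartition (Finset.Icc 1 n)) (v : ℕ) : ℕ :=
  ((arcs n A).filter (fun p => p.1 < v ∧ v < p.2)).card

/-- The depth of an arc `α = (u,v)`: the number of arcs `(i,j)` with `i < u < v < j`. -/
noncomputable def arcDepth (n : ℕ) (A : Finpartition (Finset.Icc 1 n)) (α : ℕ × ℕ) : ℕ :=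
  ((arcs n A).filter (fun p => p.1 < α.1 ∧ α.2 < p.2)).card

/-- The depth index `t(A) = Σ_{i=1}^m (n−i) − Σ_{v=1}^n depth(v) + Σ_{α} depth(α)`,
where `m` is the number of arcs of `A`. -/
noncomputable def depthIndex (n : ℕ) (A : Finpartition (Finset.Icc 1 n)) : ℤ :=
  (∑ i ∈ Finset.Icc 1 (arcs n A).card, ((n : ℤ) - (i : ℤ)))
    - ∑ v ∈ Finset.Icc 1 n, (vertexDepth n A v : ℤ)
    + ∑ α ∈ arcs n A, (arcDepth n A α : ℤ)

/-- The intertwining number of `A`: the sum over all unordered pairs of distinct blocks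
`{B, C}` of the number of pairs `(b,c) ∈ B × C` with no element of `B ∪ C` strictly between
them.  Since distinct blocks are disjoint, this equals the number of pairs `(x,y)` with
`x < y` lying in different blocks `B ∋ x`, `C ∋ y` such that no element of `B ∪ C` lies
strictly between `x` and `y`. -/
noncomputable def inumber (n : ℕ) (A : Finpartition (Finset.Icc 1 n)) : ℕ :=
  ((Finset.Icc 1 n ×ˢ Finset.Icc 1 n).filter
    (fun p => p.1 < p.2 ∧ ∃ B ∈ A.parts, ∃ C ∈ A.parts, B ≠ C ∧ p.1 ∈ B ∧ p.2 ∈ C ∧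
      ∀ k ∈ B ∪ C, ¬ (p.1 < k ∧ k < p.2))).card

/-- `u` and `v` lie in the same block of `A`. -/
def sameBlock (n : ℕ) (A : Finpartition (Finset.Icc 1 n)) (u v : ℕ) : Prop :=
  ∃ B ∈ A.parts, u ∈ B ∧ v ∈ B

/-- The partner of `v`: `0` if `v` is the minimum of its block, and otherwise the largest
element of the block of `v` smaller than `v`. -/
noncomputable def partner (n : ℕ) (A : Finpartition (Finset.Icc 1 n)) (v : ℕ) : ℕ :=
  ((Finset.Icc 1 n).filter (fun u => u < v ∧ sameBlock n A u v)).sup id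

/-- The partial depth index `t_v(A) = u + #{arcs (i,j) : u < i < j < v}`, where `u` is the
partner of `v`. -/
noncomputable def partialDepthIndex (n : ℕ) (A : Finpartition (Finset.Icc 1 n)) (v : ℕ) : ℕ :=
  partner n A v +
    ((arcs n A).filter (fun p => partner n A v < p.1 ∧ p.2 < v)).card

/-- The partial intertwining number `i_v(A)`: the number of `i` with `u < i < v` (where `u`
is the partner of `v`) such that `i` has no successor in its block, or the successor of `i`
in its block is greater than `v`; i.e. every element of the block of `i` larger than `i`
is larger than `v`. -/
noncomputable def partialInumber (n : ℕ) (A : Finpartition (Finset.Icc 1 n)) (v : ℕ) : ℕ :=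
  ((Finset.Icc 1 n).filter
    (fun i => partner n A v < i ∧ i < v ∧
      ∀ j, sameBlock n A i j → i < j → v < j)).card

/-- The adjacency matrix of `A`: the `n × n` rational matrix whose `(i,j)` entry is `1` if
`(i+1, j+1)` is an arc of `A` (indices shifted from `Fin n` to `{1,…,n}`) and `0` otherwise. -/
noncomputable def adjMatrix (n : ℕ) (A : Finpartition (Finset.Icc 1 n)) :
    Matrix (Fin n) (Fin n) ℚ :=
  fun i j => if ((i : ℕ) + 1, (j : ℕ) + 1) ∈ arcs n A then 1 else 0

/-- The rank-control matrix entry `r_{i,j}` of an `n × n` matrix `M`: the rank of the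
submatrix of `M` consisting of rows `{i, i+1, …, n}` and columns `{1, …, j}`
(in 1-based indexing). -/
noncomputable def rankControl (n : ℕ) (M : Matrix (Fin n) (Fin n) ℚ) (i j : ℕ) : ℕ :=
  (M.submatrix (fun k : {k : Fin n // i ≤ (k : ℕ) + 1} => (k : Fin n))
               (fun l : {l : Fin n // (l : ℕ) + 1 ≤ j} => (l : Fin n))).rank

end

/-!
Both sides are sums over the arcs. The map `v ↦ (partner v, v)` is a bijection from the elements
that are not the minimum of their block onto the arcs, so `∑ v, partner v = ∑ (a, b), a`, and
for an arc `(a, b)` the `v > b` with `partner v ≥ a` correspond to the arcs `(c, d)` with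
`c ≥ a`, `d > b`. Splitting the arcs ending after `b` according to whether they nest over
`(a, b)`, the arc `(a, b)` contributes `a + n - b - r + depth (a, b)` to the right-hand side,
where `r` is the number of arcs ending after `b`. Since distinct arcs have distinct right
endpoints, `r` takes each value `0, …, m - 1` exactly once, so `∑_{i=1}^m (n - i)` is the sum of
`n - 1 - r` over the arcs, and the left-hand side contributes the same amount per arc.
-/

theorem Finset.sum_card_filter_lt_eq_sum_range {α β M : Type*} [LinearOrder β]
    [AddCommMonoid M] {s : Finset α} {f : α → β} (hf : Set.InjOn f s) (g : ℕ → M) :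
    ∑ x ∈ s, g #{y ∈ s | f x < f y} = ∑ i ∈ range #s, g i := by
  set r : α → ℕ := fun x => #{y ∈ s | f x < f y}
  have r_lt_card : ∀ x ∈ s, r x < #s := fun x hx =>
    card_lt_card <| (ssubset_iff_of_subset (filter_subset _ s)).2 ⟨x, hx, by simp⟩
  have r_strictAnti : ∀ x ∈ s, ∀ x' ∈ s, f x < f x' → r x' < r x := by
    intro x hx x' hx' hlt
    refine card_lt_card <| (ssubset_iff_of_subset ?_).2 ⟨x', mem_filter.2 ⟨hx', hlt⟩, by simp⟩
    exact monotone_filter_right s fun y _ hy => hlt.trans hy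
  have r_injOn : Set.InjOn r s := by
    intro x hx x' hx' hr
    by_contra hne
    rcases (hf.ne hx hx' hne).lt_or_gt with hlt | hlt
    · exact (r_strictAnti x hx x' hx' hlt).ne hr.symm
    · exact (r_strictAnti x' hx' x hx hlt).ne hr
  have image_r : s.image r = range #s := by
    refine eq_of_subset_of_card_le (fun i hi => ?_) ?_
    · obtain ⟨x, hx, rfl⟩ := mem_image.1 hi
      exact mem_range.2 (r_lt_card x hx)
    · rw [card_image_of_injOn r_injOn, card_range]
  rw [← image_r, sum_image r_injOn]

section Arcs

variable {n : ℕ} {A : Finpartition (Icc 1 n)}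

theorem mem_arcs_bounds {p : ℕ × ℕ} (hp : p ∈ arcs n A) : 1 ≤ p.1 ∧ p.1 < p.2 ∧ p.2 ≤ n := by
  simp only [arcs, mem_filter, mem_product, mem_Icc] at hp
  omega

theorem partner_eq_of_mem_arcs {a b : ℕ} (h : (a, b) ∈ arcs n A) : partner n A b = a := by
  simp only [arcs, mem_filter, mem_product] at h
  obtain ⟨⟨ha, -⟩, hab, B, hB, haB, hbB, hgap⟩ := h
  refine le_antisymm (Finset.sup_le fun u hu => ?_)
    (le_sup (f := id) (mem_filter.2 ⟨ha, hab, B, hB, haB, hbB⟩))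
  obtain ⟨-, hub, C, hC, huC, hbC⟩ := mem_filter.1 hu
  obtain rfl := A.eq_of_mem_parts hB hC hbB hbC
  exact not_lt.1 fun hau => hgap u huC ⟨hau, hub⟩

theorem partner_mem_arcs {v : ℕ} (hv : v ∈ Icc 1 n) (h : partner n A v ≠ 0) :
    (partner n A v, v) ∈ arcs n A := by
  set T := {u ∈ Icc 1 n | u < v ∧ sameBlock n A u v}
  have hT : T.Nonempty := nonempty_iff_ne_empty.2 fun hT => h (by simp [partner, T, hT])
  obtain ⟨u, hu, hsup⟩ := exists_mem_eq_sup T hT id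
  have hpartner : partner n A v = u := hsup
  obtain ⟨huI, huv, B, hB, huB, hvB⟩ := mem_filter.1 hu
  rw [hpartner]
  refine mem_filter.2 ⟨mem_product.2 ⟨huI, hv⟩, huv, B, hB, huB, hvB, fun k hkB ⟨huk, hkv⟩ => ?_⟩
  have hkT : k ∈ T := mem_filter.2 ⟨A.le hB hkB, hkv, B, hB, hkB, hvB⟩
  have hku : k ≤ partner n A v := le_sup (f := id) hkT
  omega

theorem arcs_eq_image_partner :
    arcs n A = {v ∈ Icc 1 n | partner n A v ≠ 0}.image fun v => (partner n A v, v) := by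
  ext ⟨a, b⟩
  simp only [mem_image, mem_filter, Prod.mk.injEq]
  constructor
  · intro h
    have hb := mem_arcs_bounds h
    have ha := partner_eq_of_mem_arcs h
    exact ⟨b, ⟨mem_Icc.2 ⟨by omega, hb.2.2⟩, by omega⟩, ha, rfl⟩
  · rintro ⟨v, ⟨hv, hv0⟩, rfl, rfl⟩
    exact partner_mem_arcs hv hv0

theorem partner_pair_injective : Function.Injective fun v => (partner n A v, v) :=
  fun _ _ h => (Prod.ext_iff.1 h).2

theorem sum_partner : ∑ v ∈ Icc 1 n, partner n A v = ∑ p ∈ arcs n A, p.1 := by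
  rw [arcs_eq_image_partner, sum_image fun _ _ _ _ h => partner_pair_injective h,
    sum_filter_ne_zero]

theorem card_filter_arcs (P : ℕ × ℕ → Prop) [DecidablePred P] :
    #{q ∈ arcs n A | P q} = #{v ∈ Icc 1 n | partner n A v ≠ 0 ∧ P (partner n A v, v)} := by
  rw [arcs_eq_image_partner, filter_image, card_image_of_injective _ partner_pair_injective,
    filter_filter]

theorem snd_injOn_arcs : Set.InjOn Prod.snd (arcs n A : Set (ℕ × ℕ)) := by
  intro p hp q hq h
  have hp' : partner n A p.2 = p.1 := partner_eq_of_mem_arcs hp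
  have hq' : partner n A q.2 = q.1 := partner_eq_of_mem_arcs hq
  exact Prod.ext (by rw [← hp', ← hq', h]) h

theorem card_filter_partner_lt_add_card_filter_arcs {p : ℕ × ℕ} (hp : p ∈ arcs n A) :
    #{v ∈ Icc 1 n | partner n A v < p.1 ∧ p.2 < v} + #{q ∈ arcs n A | p.1 ≤ q.1 ∧ p.2 < q.2} =
      n - p.2 := by
  have hp' := mem_arcs_bounds hp
  have hIoc : {v ∈ Icc 1 n | p.2 < v} = Ioc p.2 n := by
    ext v
    simp only [mem_filter, mem_Icc, mem_Ioc]
    omega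
  rw [card_filter_arcs, ← Nat.card_Ioc, ← hIoc,
    ← card_filter_add_card_filter_not (s := {v ∈ Icc 1 n | p.2 < v})
      fun v => partner n A v < p.1, filter_filter, filter_filter]
  congr 2 <;> exact filter_congr fun v _ => by omega

theorem card_filter_arcs_le_fst_add_arcDepth (p : ℕ × ℕ) :
    #{q ∈ arcs n A | p.1 ≤ q.1 ∧ p.2 < q.2} + arcDepth n A p = #{q ∈ arcs n A | p.2 < q.2} := by
  rw [arcDepth, ← card_filter_add_card_filter_not (s := {q ∈ arcs n A | p.2 < q.2})
    fun q => p.1 ≤ q.1, filter_filter, filter_filter]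
  congr 2 <;> exact filter_congr fun q _ => by omega

theorem sum_vertexDepth :
    ∑ v ∈ Icc 1 n, (vertexDepth n A v : ℤ) = ∑ p ∈ arcs n A, ((p.2 : ℤ) - p.1 - 1) := by
  have hswap : ∑ v ∈ Icc 1 n, vertexDepth n A v =
      ∑ p ∈ arcs n A, #{v ∈ Icc 1 n | p.1 < v ∧ v < p.2} :=
    sum_card_bipartiteAbove_eq_sum_card_bipartiteBelow
      fun (v : ℕ) (p : ℕ × ℕ) => p.1 < v ∧ v < p.2
  rw [← Nat.cast_sum, hswap, Nat.cast_sum]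
  refine sum_congr rfl fun p hp => ?_
  have hp' := mem_arcs_bounds hp
  have hIoo : {v ∈ Icc 1 n | p.1 < v ∧ v < p.2} = Ioo p.1 p.2 := by
    ext v
    simp only [mem_filter, mem_Icc, mem_Ioo]
    omega
  rw [hIoo, Nat.card_Ioo]
  omega

theorem sum_card_filter_partner_lt :
    ∑ v ∈ Icc 1 n, (#{p ∈ arcs n A | partner n A v < p.1 ∧ p.2 < v} : ℤ) =
      ∑ p ∈ arcs n A, ((n : ℤ) - p.2 - #{q ∈ arcs n A | p.2 < q.2} + arcDepth n A p) := by
  have hswap : ∑ v ∈ Icc 1 n, #{p ∈ arcs n A | partner n A v < p.1 ∧ p.2 < v} =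
      ∑ p ∈ arcs n A, #{v ∈ Icc 1 n | partner n A v < p.1 ∧ p.2 < v} :=
    sum_card_bipartiteAbove_eq_sum_card_bipartiteBelow
      fun (v : ℕ) (p : ℕ × ℕ) => partner n A v < p.1 ∧ p.2 < v
  rw [← Nat.cast_sum, hswap, Nat.cast_sum]
  refine sum_congr rfl fun p hp => ?_
  have h_above := card_filter_partner_lt_add_card_filter_arcs hp
  have h_split := card_filter_arcs_le_fst_add_arcDepth (A := A) p
  have hp' := mem_arcs_bounds hp
  omega

theorem sum_Icc_card_arcs :
    ∑ i ∈ Icc 1 #(arcs n A), ((n : ℤ) - i) =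
      ∑ p ∈ arcs n A, ((n : ℤ) - 1 - #{q ∈ arcs n A | p.2 < q.2}) := by
  rw [sum_card_filter_lt_eq_sum_range snd_injOn_arcs fun i => (n : ℤ) - 1 - i,
    ← Ico_add_one_right_eq_Icc, sum_Ico_eq_sum_range]
  exact sum_congr rfl fun i _ => by push_cast; ring

end Arcs

theorem depthIndex_eq_sum_partialDepthIndex_general (n : ℕ)
    (A : Finpartition (Finset.Icc 1 n)) :
    depthIndex n A = ∑ v ∈ Finset.Icc 1 n, (partialDepthIndex n A v : ℤ) := by
  have sum_partner_int : ∑ v ∈ Icc 1 n, (partner n A v : ℤ) = ∑ p ∈ arcs n A, (p.1 : ℤ) := by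
    exact_mod_cast sum_partner
  simp only [depthIndex, partialDepthIndex, Nat.cast_add]
  rw [sum_Icc_card_arcs, sum_vertexDepth, ← sum_sub_distrib, ← sum_add_distrib,
    sum_add_distrib (s := Icc 1 n), sum_partner_int, sum_card_filter_partner_lt,
    ← sum_add_distrib]
  exact sum_congr rfl fun p _ => by ring

/-- For `n ≥ 1` and a set partition `A` of `{1,…,n}`, the depth index equals
the sum of the partial depth indices: `t(A) = Σ_{v=1}^n t_v(A)`. -/
theorem depthIndex_eq_sum_partialDepthIndex (n : ℕ) (hn : 1 ≤ n)
    (A : Finpartition (Finset.Icc 1 n)) :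
    depthIndex n A = ∑ v ∈ Finset.Icc 1 n, (partialDepthIndex n A v : ℤ) :=
  depthIndex_eq_sum_partialDepthIndex_general n A
end

section
/- Let n ≥ 1, let A be a set partition of {1,…,n}, and let v ∈ {1,…,n}. Then the partial depth index and the partial intertwining number at v satisfy t_v(A) + i_v(A) = v − 1. -/
open Finset
open scoped Classical

/-!
Let `u` be the partner of `v`. Every `i` with `u < i < v` either has no successor before `v`,
and is then counted by `i_v(A)`, or its successor lies strictly before `v` (it cannot be `v`,
whose predecessor in its block is `u < i`), and then `i` is the left end of exactly one arc
inside `(u, v)`. Hence `t_v(A) + i_v(A) = u + (v - u - 1) = v - 1`.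
-/

namespace Finpartition

variable {n : ℕ} {A : Finpartition (Icc 1 n)}

theorem partner_lt {v : ℕ} (hv : 0 < v) : partner n A v < v :=
  (Finset.sup_lt_iff (by simpa using hv)).mpr fun _ hu => (mem_filter.mp hu).2.1

theorem le_partner {i v : ℕ} (hi : i ∈ Icc 1 n) (hiv : i < v) (h : sameBlock n A i v) :
    i ≤ partner n A v :=
  le_sup (f := id) (mem_filter.mpr ⟨hi, hiv, h⟩)

theorem lt_and_sameBlock_of_mem_arcs {p : ℕ × ℕ} (hp : p ∈ arcs n A) :
    p.1 < p.2 ∧ sameBlock n A p.1 p.2 := by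
  simp only [arcs, mem_filter] at hp
  obtain ⟨-, hlt, B, hB, h1, h2, -⟩ := hp
  exact ⟨hlt, B, hB, h1, h2⟩

theorem injOn_fst_arcs : Set.InjOn Prod.fst (arcs n A : Set (ℕ × ℕ)) := by
  intro p hp q hq hpq
  simp only [arcs, coe_filter, Set.mem_ofPred_eq] at hp hq
  obtain ⟨-, hp12, B, hB, hB1, hB2, hBgap⟩ := hp
  obtain ⟨-, hq12, C, hC, hC1, hC2, hCgap⟩ := hq
  obtain rfl : B = C := A.eq_of_mem_parts hB hC hB1 (hpq ▸ hC1)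
  have hp2 := hCgap p.2 hB2
  have hq2 := hBgap q.2 hC2
  exact Prod.ext hpq (by omega)

theorem exists_mem_arcs_of_sameBlock {i j : ℕ} (h : sameBlock n A i j) (hij : i < j) :
    ∃ k ≤ j, (i, k) ∈ arcs n A := by
  obtain ⟨B, hB, hiB, hjB⟩ := h
  have hne : (B.filter (i < ·)).Nonempty := ⟨j, mem_filter.mpr ⟨hjB, hij⟩⟩
  obtain ⟨hkB, hik⟩ := mem_filter.mp ((B.filter (i < ·)).min'_mem hne)
  refine ⟨_, min'_le _ _ (mem_filter.mpr ⟨hjB, hij⟩), ?_⟩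
  simp only [arcs, mem_filter, mem_product]
  refine ⟨⟨A.le hB hiB, A.le hB hkB⟩, hik, B, hB, hiB, hkB, fun k hk ⟨hik', hk'⟩ => ?_⟩
  exact absurd (min'_le _ k (mem_filter.mpr ⟨hk, hik'⟩)) (not_le.mpr hk')

theorem card_arcs_between_partner {v : ℕ} :
    #{p ∈ arcs n A | partner n A v < p.1 ∧ p.2 < v} =
      #{i ∈ Ioo (partner n A v) v | ¬ ∀ j, sameBlock n A i j → i < j → v < j} := by
  refine card_nbij Prod.fst (fun p hp => ?_)
    ((injOn_fst_arcs (A := A)).mono fun p hp => ?_) fun i hi => ?_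
  · obtain ⟨hp, hu, hv⟩ := mem_filter.mp hp
    obtain ⟨hlt, hsb⟩ := lt_and_sameBlock_of_mem_arcs hp
    refine mem_filter.mpr ⟨mem_Ioo.mpr ⟨hu, hlt.trans hv⟩, fun hP => ?_⟩
    have := hP _ hsb hlt
    omega
  · exact (mem_filter.mp hp).1
  · simp only [coe_filter, mem_Ioo, Set.mem_ofPred_eq, not_forall, not_lt] at hi
    obtain ⟨⟨hu, hv⟩, j, hsb, hij, hjv⟩ := hi
    obtain ⟨k, hkj, hk⟩ := exists_mem_arcs_of_sameBlock hsb hij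
    have hkv : k ≠ v := by
      rintro rfl
      have hi : i ∈ Icc 1 n := (mem_product.mp (mem_filter.mp hk).1).1
      have := le_partner hi hv (lt_and_sameBlock_of_mem_arcs hk).2
      omega
    exact ⟨(i, k), mem_filter.mpr ⟨hk, hu, by omega⟩, rfl⟩

theorem partialInumber_eq_card_Ioo {v : ℕ} (hv : v ≤ n) :
    partialInumber n A v =
      #{i ∈ Ioo (partner n A v) v | ∀ j, sameBlock n A i j → i < j → v < j} := by
  unfold partialInumber
  congr 1
  ext i
  simp only [mem_filter, mem_Icc, mem_Ioo]
  constructor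
  · rintro ⟨-, hu, hiv, hP⟩
    exact ⟨⟨hu, hiv⟩, hP⟩
  · rintro ⟨⟨hu, hiv⟩, hP⟩
    exact ⟨⟨by omega, by omega⟩, hu, hiv, hP⟩

end Finpartition

theorem partialDepthIndex_add_partialInumber_general (n : ℕ)
    (A : Finpartition (Finset.Icc 1 n)) (v : ℕ) (hv : v ∈ Finset.Icc 1 n) :
    partialDepthIndex n A v + partialInumber n A v = v - 1 := by
  obtain ⟨hv1, hvn⟩ := mem_Icc.mp hv
  have hu : partner n A v < v := Finpartition.partner_lt hv1
  rw [partialDepthIndex, Finpartition.card_arcs_between_partner,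
    Finpartition.partialInumber_eq_card_Ioo hvn, add_assoc,
    add_comm #{i ∈ _ | ¬_}, card_filter_add_card_filter_not, Nat.card_Ioo]
  omega

/-- For `n ≥ 1`, a set partition `A` of `{1,…,n}` and `v ∈ {1,…,n}`,
the partial depth index and partial intertwining number at `v` satisfy
`t_v(A) + i_v(A) = v − 1`. -/
theorem partialDepthIndex_add_partialInumber (n : ℕ) (hn : 1 ≤ n)
    (A : Finpartition (Finset.Icc 1 n)) (v : ℕ) (hv : v ∈ Finset.Icc 1 n) :
    partialDepthIndex n A v + partialInumber n A v = v - 1 :=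
  partialDepthIndex_add_partialInumber_general n A v hv
end

section
/- Let n ≥ 1 and let A be a set partition of {1,…,n}. Then the intertwining number of A equals the sum of the partial intertwining numbers: i(A) = Σ_{v=1}^n i_v(A). -/
open Finset
open scoped Classical

/-!
Sort the intertwining pairs `x < v` by their right end `v`. With `B ∋ x` and `C ∋ v` distinct
blocks, "no element of `B ∪ C` strictly between `x` and `v`" splits into two conditions: no
element of `C` lies in `[x, v)`, i.e. the partner of `v` is below `x`, and no element of `B`
lies in `(x, v]`, i.e. the successor of `x`, if any, is beyond `v`. These are exactly the
conditions counted by `i_v(A)`.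
-/

theorem notMem_and_forall_not_between_iff {α : Type*} [LinearOrder α] {B C : Finset α}
    {x v : α} (hxv : x < v) (hvB : v ∈ B → x ∈ C) :
    (x ∉ C ∧ ∀ k ∈ B ∪ C, ¬(x < k ∧ k < v)) ↔
      (∀ u ∈ C, u < v → u < x) ∧ ∀ j ∈ B, x < j → v < j := by
  constructor
  · rintro ⟨hxC, hgap⟩
    refine ⟨fun u hu huv => lt_of_not_ge fun hxu => ?_, fun j hj hxj => lt_of_not_ge fun hjv => ?_⟩
    · rcases hxu.eq_or_lt with rfl | hxu
      · exact hxC hu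
      · exact hgap u (mem_union_right _ hu) ⟨hxu, huv⟩
    · rcases hjv.eq_or_lt with rfl | hjv
      · exact hxC (hvB hj)
      · exact hgap j (mem_union_left _ hj) ⟨hxj, hjv⟩
  · rintro ⟨hC, hB⟩
    refine ⟨fun hxC => (hC x hxC hxv).false, fun k hk ⟨hxk, hkv⟩ => ?_⟩
    rcases mem_union.1 hk with hkB | hkC
    · exact (hB k hkB hxk).not_gt hkv
    · exact (hC k hkC hkv).not_gt hxk

section

variable {n : ℕ} {A : Finpartition (Icc 1 n)}

theorem sameBlock_iff_left_mem_part {u v : ℕ} : sameBlock n A u v ↔ u ∈ A.part v :=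
  A.mem_part_iff_exists.symm

theorem sameBlock_iff_right_mem_part {u v : ℕ} : sameBlock n A u v ↔ v ∈ A.part u :=
  (exists_congr fun _ => and_congr_right fun _ => and_comm).trans A.mem_part_iff_exists.symm

theorem partner_lt_iff {v x : ℕ} (hx : 0 < x) :
    partner n A v < x ↔ ∀ u ∈ A.part v, u < v → u < x := by
  rw [partner, Finset.sup_lt_iff (show ⊥ < x from hx)]
  simp only [mem_filter, sameBlock_iff_left_mem_part, id]
  exact ⟨fun h u hu huv => h u ⟨A.part_subset v hu, huv, hu⟩, fun h u hu => h u hu.2.2 hu.2.1⟩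

theorem exists_distinct_parts_iff {x v : ℕ} (hx : x ∈ Icc 1 n) (hv : v ∈ Icc 1 n)
    (p : Finset ℕ → Finset ℕ → Prop) :
    (∃ B ∈ A.parts, ∃ C ∈ A.parts, B ≠ C ∧ x ∈ B ∧ v ∈ C ∧ p B C) ↔
      x ∉ A.part v ∧ p (A.part x) (A.part v) := by
  rw [A.mem_part_iff_part_eq_part hx hv]
  constructor
  · rintro ⟨B, hB, C, hC, hBC, hxB, hvC, hp⟩
    rw [A.part_eq_of_mem hB hxB, A.part_eq_of_mem hC hvC]
    exact ⟨hBC, hp⟩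
  · rintro ⟨hne, hp⟩
    exact ⟨_, A.part_mem.2 hx, _, A.part_mem.2 hv, hne, A.mem_part hx, A.mem_part hv, hp⟩

theorem intertwiningPair_iff {x v : ℕ} (hx : x ∈ Icc 1 n) (hv : v ∈ Icc 1 n) :
    (x < v ∧ ∃ B ∈ A.parts, ∃ C ∈ A.parts, B ≠ C ∧ x ∈ B ∧ v ∈ C ∧
        ∀ k ∈ B ∪ C, ¬(x < k ∧ k < v)) ↔
      partner n A v < x ∧ x < v ∧ ∀ j, sameBlock n A x j → x < j → v < j := by
  rw [exists_distinct_parts_iff hx hv (fun B C => ∀ k ∈ B ∪ C, ¬(x < k ∧ k < v)),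
    partner_lt_iff (mem_Icc.1 hx).1]
  simp only [sameBlock_iff_right_mem_part]
  have hvB (hvx : v ∈ A.part x) : x ∈ A.part v :=
    sameBlock_iff_left_mem_part.1 (sameBlock_iff_right_mem_part.2 hvx)
  constructor
  · rintro ⟨hxv, h⟩
    obtain ⟨hC, hB⟩ := (notMem_and_forall_not_between_iff hxv hvB).1 h
    exact ⟨hC, hxv, hB⟩
  · rintro ⟨hC, hxv, hB⟩
    exact ⟨hxv, (notMem_and_forall_not_between_iff hxv hvB).2 ⟨hC, hB⟩⟩

end

theorem inumber_eq_sum_partialInumber_general (n : ℕ)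
    (A : Finpartition (Finset.Icc 1 n)) :
    inumber n A = ∑ v ∈ Finset.Icc 1 n, partialInumber n A v := by
  rw [inumber, card_filter, sum_product_right]
  refine sum_congr rfl fun v hv => ?_
  rw [partialInumber, card_filter]
  exact sum_congr rfl fun x hx => if_congr (intertwiningPair_iff hx hv) rfl rfl

/-- For `n ≥ 1` and a set partition `A` of `{1,…,n}`, the intertwining
number equals the sum of the partial intertwining numbers: `i(A) = Σ_{v=1}^n i_v(A)`. -/
theorem inumber_eq_sum_partialInumber (n : ℕ) (hn : 1 ≤ n)
    (A : Finpartition (Finset.Icc 1 n)) :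
    inumber n A = ∑ v ∈ Finset.Icc 1 n, partialInumber n A v :=
  inumber_eq_sum_partialInumber_general n A
end
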